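/- (Theorem 3.2, convergence of cyclic coordinate descent under Setting ALL, adapted from Beck–Tetruashvili.) Let f : ℝ^d → ℝ be convex, differentiable and L-smooth with a nonempty set of minimizers, let p ≥ 1 be the number of blocks, K ≥ 1 the number of cycles, N = pK, and let 0 < α ≤ 1/L. Let (x^(n))_{n=0,...,N} be the iterates of cyclic coordinate descent: x^(n) = x^(n−1) − α U_{i_n} ∇_{i_n} f(x^(n−1)) with block index i_n = ((n−1) mod p) + 1. Assume (Setting ALL) that there is R_a > 0 such that ‖x^(pk) − x*‖ ≤ R_a for every minimizer x* of f and every k ∈ {1,...,K}. Then f(x^(N)) − f* ≤ (4/α)(1 + p α² L²) · p/(N + 8) · R_a², where f* is the minimum value of f. -/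

import Mathlib

set_option maxHeartbeats 1000000

open scoped RealInnerProductSpace

noncomputable section

section Helpers

variable {E : Type*} [NormedAddCommGroup E] [InnerProductSpace ℝ E] [CompleteSpace E]

lemma hasDerivAt_line (f : E → ℝ) (hdiff : Differentiable ℝ f) (x v : E) (t : ℝ) :
    HasDerivAt (fun s : ℝ => f (x + s • v)) ⟪gradient f (x + t • v), v⟫ t := by
  have hline : HasDerivAt (fun s : ℝ => x + s • v) v t := by
    simpa using ((hasDerivAt_id t).smul_const v).const_add x
  have h1 : HasFDerivAt f (fderiv ℝ f (x + t • v)) (x + t • v) := (hdiff _).hasFDerivAt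
  have h2 := h1.comp_hasDerivAt t hline
  have h3 : fderiv ℝ f (x + t • v) v = ⟪gradient f (x + t • v), v⟫ := by
    rw [gradient]; exact (InnerProductSpace.toDual_symm_apply).symm
  rw [← h3]; exact h2

lemma convex_grad_ineq (f : E → ℝ) (hconv : ConvexOn ℝ Set.univ f) (hdiff : Differentiable ℝ f)
    (x y : E) : f x + ⟪gradient f x, y - x⟫ ≤ f y := by
  have hline := hasDerivAt_line f hdiff x (y - x) 0
  simp only [zero_smul, add_zero] at hline
  have hg : ConvexOn ℝ Set.univ (fun s : ℝ => f (x + s • (y - x))) := by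
    have h := hconv.comp_affineMap (AffineMap.lineMap x y (k := ℝ))
    have he : (fun s : ℝ => f (x + s • (y - x))) = f ∘ (AffineMap.lineMap x y) := by
      funext s; simp [AffineMap.lineMap_apply, add_comm]
    rw [he]
    simpa using h
  have hs := hg.le_slope_of_hasDerivAt (Set.mem_univ (0:ℝ)) (Set.mem_univ (1:ℝ)) one_pos hline
  rw [slope_def_field] at hs
  simp only [one_smul, zero_smul, add_zero] at hs
  have h1 : f (x + (y - x)) = f y := by rw [add_sub_cancel]
  rw [h1] at hs
  norm_num at hs ⊢
  linarith

lemma descent_lemma (f : E → ℝ) (hdiff : Differentiable ℝ f) {L : ℝ}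
    (hsmooth : ∀ x h : E, ‖gradient f (x + h) - gradient f x‖ ≤ L * ‖h‖) (x v : E) :
    f (x + v) ≤ f x + ⟪gradient f x, v⟫ + L / 2 * ‖v‖ ^ 2 := by
  set φ : ℝ → ℝ := fun t => f (x + t • v) - t * ⟪gradient f x, v⟫ - L * t ^ 2 / 2 * ‖v‖ ^ 2 with hφ
  have hφd : ∀ t : ℝ, HasDerivAt φ
      (⟪gradient f (x + t • v), v⟫ - ⟪gradient f x, v⟫ - L * t * ‖v‖ ^ 2) t := by
    intro t
    have h1 := hasDerivAt_line f hdiff x v t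
    have h2 : HasDerivAt (fun t : ℝ => t * ⟪gradient f x, v⟫) ⟪gradient f x, v⟫ t := by
      simpa using (hasDerivAt_id t).mul_const (⟪gradient f x, v⟫)
    have h3 : HasDerivAt (fun t : ℝ => L * t ^ 2 / 2 * ‖v‖ ^ 2) (L * t * ‖v‖ ^ 2) t := by
      have h4 : HasDerivAt (fun t : ℝ => t ^ 2) (2 * t) t := by
        simpa using hasDerivAt_pow 2 t
      have h5 := ((h4.const_mul L).div_const 2).mul_const (‖v‖ ^ 2)
      rw [show L * t * ‖v‖ ^ 2 = L * (2 * t) / 2 * ‖v‖ ^ 2 by ring]; exact h5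
    exact (h1.sub h2).sub h3
  have hanti : AntitoneOn φ (Set.Icc (0:ℝ) 1) := by
    apply antitoneOn_of_deriv_nonpos (convex_Icc 0 1)
    · exact fun t _ => ((hφd t).differentiableAt).continuousAt.continuousWithinAt
    · exact fun t _ => ((hφd t).differentiableAt).differentiableWithinAt
    · intro t ht
      rw [interior_Icc] at ht
      rw [(hφd t).deriv]
      have hb : ⟪gradient f (x + t • v), v⟫ - ⟪gradient f x, v⟫
          = ⟪gradient f (x + t • v) - gradient f x, v⟫ := (inner_sub_left _ _ _).symm
      have hc : ⟪gradient f (x + t • v) - gradient f x, v⟫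
          ≤ ‖gradient f (x + t • v) - gradient f x‖ * ‖v‖ := real_inner_le_norm _ _
      have hd : ‖gradient f (x + t • v) - gradient f x‖ ≤ L * ‖t • v‖ := hsmooth x (t • v)
      have he : ‖t • v‖ = t * ‖v‖ := by
        rw [norm_smul, Real.norm_eq_abs, abs_of_pos ht.1]
      rw [he] at hd
      have hf := mul_le_mul_of_nonneg_right hd (norm_nonneg v)
      have hg : L * (t * ‖v‖) * ‖v‖ = L * t * ‖v‖ ^ 2 := by ring
      linarith
  have h01 := hanti (Set.left_mem_Icc.2 zero_le_one) (Set.right_mem_Icc.2 zero_le_one) zero_le_one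
  simp only [hφ, one_smul, zero_smul, add_zero, one_pow, zero_pow, one_mul, zero_mul,
    mul_zero, sub_zero] at h01
  linarith

lemma gradient_eq_zero_of_min (f : E → ℝ) (x : E) (hmin : ∀ y, f x ≤ f y) :
    gradient f x = 0 := by
  have hlm : IsLocalMin f x := Filter.Eventually.of_forall hmin
  have h := hlm.fderiv_eq_zero
  rw [gradient, h]
  simp

end Helpers

/-- `ℝ^d = ℝ^{d_1} × ⋯ × ℝ^{d_p}` with the Euclidean norm. -/
abbrev BlockSpace (p : ℕ) (d : Fin p → ℕ) : Type :=
  PiLp 2 (fun i : Fin p => EuclideanSpace ℝ (Fin (d i)))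

/-- `embed i h = U_i h`: the vector of `ℝ^d` whose block `i` equals `h`, all other blocks 0. -/
def embed {p : ℕ} {d : Fin p → ℕ} (i : Fin p) (h : EuclideanSpace ℝ (Fin (d i))) :
    BlockSpace p d :=
  (WithLp.equiv 2 _).symm (Pi.single i h)

/-- `partialGrad f x i = ∇_i f(x) = U_iᵀ ∇f(x)`: block `i` of the gradient of `f` at `x`. -/
def partialGrad {p : ℕ} {d : Fin p → ℕ} (f : BlockSpace p d → ℝ) (x : BlockSpace p d)
    (i : Fin p) : EuclideanSpace ℝ (Fin (d i)) :=
  (WithLp.equiv 2 _) (gradient f x) i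

/-- The block updated at step `n+1` of cyclic coordinate descent (0-based: step `n+1`
updates block `n mod p`, i.e. in 1-based notation step `n` updates block `((n-1) mod p)+1`). -/
def cyclicBlock (p : ℕ) (hp : 0 < p) (n : ℕ) : Fin p := ⟨n % p, Nat.mod_lt n hp⟩

section BlockLemmas

variable {p : ℕ} {d : Fin p → ℕ}

lemma inner_embed (g : BlockSpace p d) (i : Fin p) (h : EuclideanSpace ℝ (Fin (d i))) :
    ⟪g, embed i h⟫ = ⟪(WithLp.equiv 2 _) g i, h⟫ := by
  rw [embed, PiLp.inner_apply]
  rw [Finset.sum_eq_single i]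
  · simp [PiLp.toLp_apply, WithLp.equiv_apply]
  · intro j _ hj
    simp [PiLp.toLp_apply, Pi.single_eq_of_ne hj]
  · simp

lemma inner_embed_embed_same (i : Fin p) (u v : EuclideanSpace ℝ (Fin (d i))) :
    ⟪embed i u, embed i v⟫ = ⟪u, v⟫ := by
  rw [inner_embed]
  simp [embed, WithLp.equiv_apply, PiLp.toLp_apply]

lemma inner_embed_embed_ne {i j : Fin p} (hij : i ≠ j) (u : EuclideanSpace ℝ (Fin (d i)))
    (v : EuclideanSpace ℝ (Fin (d j))) : ⟪embed i u, embed j v⟫ = 0 := by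
  rw [inner_embed]
  have : (WithLp.equiv 2 _) (embed i u) j = 0 := by
    simp [embed, WithLp.equiv_apply, PiLp.toLp_apply,
      Pi.single_eq_of_ne (Ne.symm hij)]
  rw [this, inner_zero_left]

lemma norm_embed (i : Fin p) (u : EuclideanSpace ℝ (Fin (d i))) : ‖embed (d := d) i u‖ = ‖u‖ := by
  have h1 : ‖embed (d := d) i u‖ ^ 2 = ‖u‖ ^ 2 := by
    rw [← real_inner_self_eq_norm_sq, ← real_inner_self_eq_norm_sq, inner_embed_embed_same]
  rw [← Real.sqrt_sq (norm_nonneg (embed (d := d) i u)), h1, Real.sqrt_sq (norm_nonneg u)]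

lemma norm_sq_sum_embed (m : ℕ) (b : ℕ → Fin p) (hb : ∀ j < m, (b j).val = j)
    (c : ∀ j : ℕ, EuclideanSpace ℝ (Fin (d (b j)))) :
    ‖∑ j ∈ Finset.range m, embed (b j) (c j)‖ ^ 2 = ∑ j ∈ Finset.range m, ‖c j‖ ^ 2 := by
  induction m with
  | zero => simp
  | succ m ih =>
    rw [Finset.sum_range_succ, Finset.sum_range_succ]
    rw [norm_add_sq_real]
    have horth : ⟪∑ j ∈ Finset.range m, embed (b j) (c j), embed (b m) (c m)⟫ = 0 := by
      rw [sum_inner]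
      refine Finset.sum_eq_zero fun j hj => ?_
      have hjm : j < m := Finset.mem_range.1 hj
      have hne : b j ≠ b m := by
        intro h
        have := congrArg Fin.val h
        rw [hb j (by omega), hb m (by omega)] at this
        omega
      exact inner_embed_embed_ne hne (c j) (c m)
    rw [horth, norm_embed, ih (fun j hj => hb j (by omega))]
    ring

lemma norm_block_le (g : BlockSpace p d) (i : Fin p) : ‖(WithLp.equiv 2 _) g i‖ ≤ ‖g‖ := by
  have h1 : ‖g‖ ^ 2 = ∑ j, ‖g j‖ ^ 2 := PiLp.norm_sq_eq_of_L2 _ g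
  have h2 : ‖g i‖ ^ 2 ≤ ‖g‖ ^ 2 := by
    rw [h1]
    exact Finset.single_le_sum (f := fun j => ‖g j‖ ^ 2) (fun j _ => sq_nonneg _)
      (Finset.mem_univ i)
  rw [WithLp.equiv_apply]
  rw [← Real.sqrt_sq (norm_nonneg (g i)), ← Real.sqrt_sq (norm_nonneg g)]
  exact Real.sqrt_le_sqrt h2

lemma norm_sq_blocks (g : BlockSpace p d) :
    ‖g‖ ^ 2 = ∑ i, ‖(WithLp.equiv 2 _) g i‖ ^ 2 := PiLp.norm_sq_eq_of_L2 _ g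

lemma step_decrease {L α : ℝ} (hL : 0 < L) (hα : 0 < α) (hαL : α ≤ 1 / L)
    (f : BlockSpace p d → ℝ) (hdiff : Differentiable ℝ f)
    (hsmooth : ∀ x h : BlockSpace p d, ‖gradient f (x + h) - gradient f x‖ ≤ L * ‖h‖)
    (y : BlockSpace p d) (i : Fin p) :
    f (y - α • embed i (partialGrad f y i)) ≤ f y - α / 2 * ‖partialGrad f y i‖ ^ 2 := by
  set g := partialGrad f y i with hg
  have h1 := descent_lemma f hdiff hsmooth y (-(α • embed i g))
  rw [← sub_eq_add_neg] at h1
  have h2 : ⟪gradient f y, -(α • embed i g)⟫ = -(α * ‖g‖ ^ 2) := by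
    rw [inner_neg_right, real_inner_smul_right, inner_embed]
    have he : (WithLp.equiv 2 _) (gradient f y) i = g := rfl
    rw [he, real_inner_self_eq_norm_sq]
  have h3 : ‖-(α • embed i g)‖ ^ 2 = α ^ 2 * ‖g‖ ^ 2 := by
    rw [norm_neg, norm_smul, norm_embed, Real.norm_eq_abs, abs_of_pos hα, mul_pow]
  rw [h2, h3] at h1
  have hαL' : α * L ≤ 1 := by
    rw [le_div_iff₀ hL] at hαL
    linarith
  have hkey : 0 ≤ α * ‖g‖ ^ 2 * (1 - α * L) :=
    mul_nonneg (mul_nonneg hα.le (sq_nonneg _)) (by linarith)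
  nlinarith [hkey]

end BlockLemmas

/-- Theorem 3.2 (adapted from Beck–Tetruashvili): convergence of cyclic coordinate descent
under Setting ALL.  If `f` is convex, differentiable, `L`-smooth with a minimizer, the CCD
iterates with step-size `0 < α ≤ 1/L` satisfy, under the assumption that all cycle iterates
stay within distance `R_a` of every minimizer,
`f(x⁽ᴺ⁾) - f* ≤ (4/α)(1 + p α² L²) · p/(N+8) · R_a²` where `N = pK`. -/
theorem ccd_convergence_setting_all
    {p K : ℕ} (hp : 0 < p) (hK : 0 < K) {d : Fin p → ℕ}
    (L α Ra : ℝ) (hL : 0 < L) (hα : 0 < α) (hαL : α ≤ 1 / L) (hRa : 0 < Ra)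
    (f : BlockSpace p d → ℝ)
    (hconv : ConvexOn ℝ Set.univ f)
    (hdiff : Differentiable ℝ f)
    (hsmooth : ∀ x h : BlockSpace p d, ‖gradient f (x + h) - gradient f x‖ ≤ L * ‖h‖)
    (xstar : BlockSpace p d) (hmin : ∀ y, f xstar ≤ f y)
    (x : ℕ → BlockSpace p d)
    (hccd : ∀ n < p * K,
      x (n + 1) = x n - α • embed (cyclicBlock p hp n) (partialGrad f (x n) (cyclicBlock p hp n)))
    (hall : ∀ z : BlockSpace p d, (∀ y, f z ≤ f y) →
      ∀ k : ℕ, 1 ≤ k → k ≤ K → ‖x (p * k) - z‖ ≤ Ra) :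
    f (x (p * K)) - f xstar ≤
      4 / α * (1 + (p : ℝ) * α ^ 2 * L ^ 2) * ((p : ℝ) / ((p : ℝ) * (K : ℝ) + 8)) * Ra ^ 2 := by
  set C : ℝ := 4 / α * (1 + (p : ℝ) * α ^ 2 * L ^ 2) with hCdef
  have hp' : (1 : ℝ) ≤ (p : ℝ) := by exact_mod_cast hp
  have hp0 : (0 : ℝ) < (p : ℝ) := by linarith
  have hK' : (1 : ℝ) ≤ (K : ℝ) := by exact_mod_cast hK
  have hCpos : 0 < C := by
    have : (0:ℝ) < 1 + (p : ℝ) * α ^ 2 * L ^ 2 := by positivity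
    positivity
  have hC8L : 8 * L ≤ C := by
    rw [hCdef, div_mul_eq_mul_div, le_div_iff₀ hα]
    nlinarith [sq_nonneg (1 - α * L), mul_nonneg (mul_nonneg (sq_nonneg α) (sq_nonneg L))
      (sub_nonneg.2 hp')]
  -- the objective gap at the start of each cycle
  set F : ℕ → ℝ := fun k => f (x (p * k)) - f xstar with hFdef
  have hF0 : ∀ k, 0 ≤ F k := fun k => sub_nonneg.2 (hmin _)
  -- per-cycle analysis
  have hcycle : ∀ k, k < K →
      ‖gradient f (x (p * k))‖ ^ 2 ≤ C * (F k - F (k + 1)) ∧ F (k + 1) ≤ F k := by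
    intro k hk
    have hbv : ∀ j, j < p → (cyclicBlock p hp (p * k + j)).val = j := by
      intro j hj
      show (p * k + j) % p = j
      rw [Nat.mul_add_mod, Nat.mod_eq_of_lt hj]
    set b : ℕ → Fin p := fun j => cyclicBlock p hp (p * k + j) with hbdef
    set c : ∀ j : ℕ, EuclideanSpace ℝ (Fin (d (b j))) :=
      fun j => partialGrad f (x (p * k + j)) (b j) with hcdef
    have hlt : ∀ m, m < p → p * k + m < p * K := by
      intro m hm
      calc p * k + m < p * k + p := by omega
        _ = p * (k + 1) := by ring
        _ ≤ p * K := Nat.mul_le_mul_left p hk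
    have hstep : ∀ m, m < p →
        f (x (p * k + m + 1)) ≤ f (x (p * k + m)) - α / 2 * ‖c m‖ ^ 2 := by
      intro m hm
      have h := hccd (p * k + m) (hlt m hm)
      rw [h]
      exact step_decrease hL hα hαL f hdiff hsmooth _ _
    have htele : ∀ m, m ≤ p →
        f (x (p * k + m)) ≤ f (x (p * k)) - α / 2 * ∑ j ∈ Finset.range m, ‖c j‖ ^ 2 := by
      intro m
      induction m with
      | zero => intro _; simp
      | succ m ih =>
        intro hm
        have h1 := ih (by omega)
        have h2 := hstep m (by omega)
        rw [Finset.sum_range_succ]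
        have : p * k + m + 1 = p * k + (m + 1) := by ring
        rw [this] at h2
        linarith
    have hiter : ∀ m, m ≤ p →
        x (p * k + m) - x (p * k) = -(α • ∑ j ∈ Finset.range m, embed (b j) (c j)) := by
      intro m
      induction m with
      | zero => intro _; simp
      | succ m ih =>
        intro hm
        have h1 := ih (by omega)
        have h2 := hccd (p * k + m) (hlt m (by omega))
        have h3 : p * k + m + 1 = p * k + (m + 1) := by ring
        rw [h3] at h2
        have h2' : x (p * k + (m + 1)) = x (p * k + m) - α • embed (b m) (c m) := h2
        rw [h2', Finset.sum_range_succ, smul_add, neg_add, ← h1]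
        abel
    have hdist : ∀ m, m ≤ p →
        ‖x (p * k + m) - x (p * k)‖ ^ 2 = α ^ 2 * ∑ j ∈ Finset.range m, ‖c j‖ ^ 2 := by
      intro m hm
      rw [hiter m hm, norm_neg, norm_smul, mul_pow, Real.norm_eq_abs, sq_abs,
        norm_sq_sum_embed m b (fun j hj => hbv j (lt_of_lt_of_le hj hm)) c]
    set T : ℝ := ∑ j ∈ Finset.range p, ‖c j‖ ^ 2 with hTdef
    have hT0 : 0 ≤ T := Finset.sum_nonneg fun j _ => sq_nonneg _
    have hTle : α / 2 * T ≤ f (x (p * k)) - f (x (p * k + p)) := by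
      have := htele p le_rfl
      linarith
    have hgb : ∀ i : Fin p, ‖partialGrad f (x (p * k)) i‖ ^ 2
        ≤ 2 * ‖c i.val‖ ^ 2 + 2 * L ^ 2 * α ^ 2 * T := by
      intro i
      have hiv : i.val < p := i.isLt
      have hbi : b i.val = i := Fin.ext (hbv i.val hiv)
      have hc : ‖c i.val‖ = ‖partialGrad f (x (p * k + i.val)) i‖ :=
        congrArg (fun j => ‖partialGrad f (x (p * k + i.val)) j‖) hbi
      have hsm : ‖gradient f (x (p * k)) - gradient f (x (p * k + i.val))‖
          ≤ L * ‖x (p * k) - x (p * k + i.val)‖ := by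
        have h := hsmooth (x (p * k + i.val)) (x (p * k) - x (p * k + i.val))
        rw [add_sub_cancel] at h
        exact h
      have hblock : ‖partialGrad f (x (p * k)) i - partialGrad f (x (p * k + i.val)) i‖
          ≤ ‖gradient f (x (p * k)) - gradient f (x (p * k + i.val))‖ := by
        have h := norm_block_le (gradient f (x (p * k)) - gradient f (x (p * k + i.val))) i
        exact h
      have htri : ‖partialGrad f (x (p * k)) i‖
          ≤ ‖partialGrad f (x (p * k + i.val)) i‖ + L * ‖x (p * k + i.val) - x (p * k)‖ := by
        have h1 : ‖partialGrad f (x (p * k)) i‖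
            ≤ ‖partialGrad f (x (p * k + i.val)) i‖
              + ‖partialGrad f (x (p * k)) i - partialGrad f (x (p * k + i.val)) i‖ := by
          have := norm_add_le (partialGrad f (x (p * k + i.val)) i)
            (partialGrad f (x (p * k)) i - partialGrad f (x (p * k + i.val)) i)
          rw [add_sub_cancel] at this
          exact this
        have h2 : ‖x (p * k) - x (p * k + i.val)‖ = ‖x (p * k + i.val) - x (p * k)‖ :=
          norm_sub_rev _ _
        rw [h2] at hsm
        linarith
      have hd := hdist i.val hiv.le
      have hsub : ∑ j ∈ Finset.range i.val, ‖c j‖ ^ 2 ≤ T := by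
        rw [hTdef]
        exact Finset.sum_le_sum_of_subset_of_nonneg
          (Finset.range_subset_range.2 hiv.le) (fun j _ _ => sq_nonneg _)
      have hr2 : ‖x (p * k + i.val) - x (p * k)‖ ^ 2 ≤ α ^ 2 * T := by
        rw [hd]
        nlinarith [sq_nonneg α]
      rw [hc]
      have ha0 : (0:ℝ) ≤ ‖partialGrad f (x (p * k)) i‖ := norm_nonneg _
      have hb0 : (0:ℝ) ≤ ‖partialGrad f (x (p * k + i.val)) i‖
          + L * ‖x (p * k + i.val) - x (p * k)‖ := by positivity
      have hsq := mul_le_mul htri htri ha0 hb0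
      have hcross := sq_nonneg (‖partialGrad f (x (p * k + i.val)) i‖
        - L * ‖x (p * k + i.val) - x (p * k)‖)
      have hLr := mul_le_mul_of_nonneg_left hr2 (sq_nonneg L)
      nlinarith [hsq, hcross, hLr]
    have hgsum : ‖gradient f (x (p * k))‖ ^ 2
        = ∑ i : Fin p, ‖partialGrad f (x (p * k)) i‖ ^ 2 :=
      norm_sq_blocks (gradient f (x (p * k)))
    have hgbound : ‖gradient f (x (p * k))‖ ^ 2 ≤ 2 * (1 + (p:ℝ) * α ^ 2 * L ^ 2) * T := by
      rw [hgsum]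
      calc ∑ i : Fin p, ‖partialGrad f (x (p * k)) i‖ ^ 2
          ≤ ∑ i : Fin p, (2 * ‖c i.val‖ ^ 2 + 2 * L ^ 2 * α ^ 2 * T) :=
            Finset.sum_le_sum fun i _ => hgb i
        _ = 2 * (∑ i : Fin p, ‖c i.val‖ ^ 2) + (p:ℝ) * (2 * L ^ 2 * α ^ 2 * T) := by
            rw [Finset.sum_add_distrib, ← Finset.mul_sum, Finset.sum_const, Finset.card_univ,
              Fintype.card_fin, nsmul_eq_mul]
        _ = 2 * T + (p:ℝ) * (2 * L ^ 2 * α ^ 2 * T) := by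
            rw [Fin.sum_univ_eq_sum_range (fun j => ‖c j‖ ^ 2) p]
        _ = 2 * (1 + (p:ℝ) * α ^ 2 * L ^ 2) * T := by ring
    have hpk1 : p * (k + 1) = p * k + p := by ring
    constructor
    · have hFsub : F k - F (k + 1) = f (x (p * k)) - f (x (p * k + p)) := by
        simp only [hFdef, hpk1]
        ring
      rw [hFsub]
      have hTle2 : T ≤ 2 / α * (f (x (p * k)) - f (x (p * k + p))) := by
        rw [div_mul_eq_mul_div, le_div_iff₀ hα]
        linarith
      calc ‖gradient f (x (p * k))‖ ^ 2 ≤ 2 * (1 + (p:ℝ) * α ^ 2 * L ^ 2) * T := hgbound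
        _ ≤ 2 * (1 + (p:ℝ) * α ^ 2 * L ^ 2) * (2 / α * (f (x (p * k)) - f (x (p * k + p)))) := by
            apply mul_le_mul_of_nonneg_left hTle2
            positivity
        _ = C * (f (x (p * k)) - f (x (p * k + p))) := by
            rw [hCdef]; ring
    · have hα2T : 0 ≤ α / 2 * T := mul_nonneg (by linarith) hT0
      simp only [hFdef, hpk1]
      linarith
  -- gap monotonicity along cycles
  have hmono2 : ∀ a n : ℕ, a ≤ n → n ≤ K → F n ≤ F a := by
    intro a n
    induction n with
    | zero => intro h _; exact le_of_eq (by rw [Nat.le_zero.1 h])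
    | succ n ih =>
      intro h hn
      rcases Nat.lt_or_ge a (n + 1) with h' | h'
      · have h1 := (hcycle n (by omega)).2
        have h2 := ih (by omega) (by omega)
        linarith
      · exact le_of_eq (by rw [Nat.le_antisymm h h'])
  -- convexity bound
  have hFub : ∀ k, 1 ≤ k → k ≤ K → F k ≤ ‖gradient f (x (p * k))‖ * Ra := by
    intro k h1 h2
    have hci := convex_grad_ineq f hconv hdiff (x (p * k)) xstar
    have hb : ⟪gradient f (x (p * k)), xstar - x (p * k)⟫
        = -⟪gradient f (x (p * k)), x (p * k) - xstar⟫ := by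
      rw [← inner_neg_right, neg_sub]
    have hcs : ⟪gradient f (x (p * k)), x (p * k) - xstar⟫
        ≤ ‖gradient f (x (p * k))‖ * ‖x (p * k) - xstar‖ := real_inner_le_norm _ _
    have hra := hall xstar hmin k h1 h2
    have : F k ≤ ⟪gradient f (x (p * k)), x (p * k) - xstar⟫ := by
      simp only [hFdef]
      rw [hb] at hci
      linarith
    calc F k ≤ ‖gradient f (x (p * k))‖ * ‖x (p * k) - xstar‖ := le_trans this hcs
      _ ≤ ‖gradient f (x (p * k))‖ * Ra :=
          mul_le_mul_of_nonneg_left hra (norm_nonneg _)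
  -- the sufficient-decrease inequality in terms of F
  have hFsq : ∀ k, 1 ≤ k → k < K → F k ^ 2 ≤ C * Ra ^ 2 * (F k - F (k + 1)) := by
    intro k h1 h2
    have ha := hFub k h1 h2.le
    have hb := (hcycle k h2).1
    have hg0 : (0:ℝ) ≤ ‖gradient f (x (p * k))‖ := norm_nonneg _
    nlinarith [hF0 k, mul_le_mul ha ha (hF0 k) (by positivity : (0:ℝ) ≤ ‖gradient f (x (p*k))‖ * Ra),
      mul_le_mul_of_nonneg_right hb (sq_nonneg Ra)]
  -- initial gap bound
  have hF1 : F 1 ≤ L / 2 * Ra ^ 2 := by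
    have h := descent_lemma f hdiff hsmooth xstar (x (p * 1) - xstar)
    rw [add_sub_cancel, gradient_eq_zero_of_min f xstar hmin, inner_zero_left] at h
    have hra := hall xstar hmin 1 le_rfl hK
    have hsq : ‖x (p * 1) - xstar‖ ^ 2 ≤ Ra ^ 2 :=
      pow_le_pow_left₀ (norm_nonneg _) hra 2
    have : L / 2 * ‖x (p * 1) - xstar‖ ^ 2 ≤ L / 2 * Ra ^ 2 :=
      mul_le_mul_of_nonneg_left hsq (by positivity)
    simp only [hFdef]
    linarith
  -- conclusion via the recursion
  show F K ≤ C * ((p : ℝ) / ((p : ℝ) * (K : ℝ) + 8)) * Ra ^ 2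
  rcases (hF0 K).eq_or_lt with hFK | hFK
  · rw [← hFK]
    positivity
  · have hFpos : ∀ k, 1 ≤ k → k ≤ K → 0 < F k := by
      intro k _ h2
      exact lt_of_lt_of_le hFK (hmono2 k K h2 le_rfl)
    have h8p : 8 / (p:ℝ) ≤ 8 := by
      rw [div_le_iff₀ hp0]; linarith
    have hinv : ∀ k, 1 ≤ k → k ≤ K → ((k:ℝ) + 8 / (p:ℝ)) * F k ≤ C * Ra ^ 2 := by
      intro k
      induction k with
      | zero => omega
      | succ k ih =>
        intro _ hk1
        rcases Nat.eq_zero_or_pos k with hk0 | hk0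
        · subst hk0
          push_cast
          nlinarith [mul_nonneg (by linarith : (0:ℝ) ≤ 8 - 8/(p:ℝ)) (hF0 1),
            mul_nonneg (by linarith : (0:ℝ) ≤ C - 8*L) (sq_nonneg Ra),
            mul_nonneg hL.le (sq_nonneg Ra), hF1, hF0 1]
        · have hkK : k < K := by omega
          have hih := ih hk0 hkK.le
          have hsqk := hFsq k hk0 hkK
          have hak := hFpos k hk0 hkK.le
          have hbk := hFpos (k + 1) (by omega) hk1
          have hba : F (k + 1) ≤ F k := (hcycle k hkK).2
          -- D a ≥ D b + a b, (k + 8/p) a ≤ D  ⟹  (k+1+8/p) b ≤ D with D = C Ra²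
          push_cast
          have h1 : ((k:ℝ) + 8 / (p:ℝ)) * F k * F (k+1) ≤ C * Ra ^ 2 * F (k+1) :=
            mul_le_mul_of_nonneg_right hih hbk.le
          have h2 : F k * F (k+1) ≤ F k * F k := mul_le_mul_of_nonneg_left hba hak.le
          have h3 : C * Ra ^ 2 * F (k+1) + F k * F (k+1) ≤ C * Ra ^ 2 * F k := by
            nlinarith [hsqk, h2]
          have h4 : ((k:ℝ) + 1 + 8 / (p:ℝ)) * F (k+1) * F k ≤ C * Ra ^ 2 * F k := by
            calc ((k:ℝ) + 1 + 8 / (p:ℝ)) * F (k+1) * F k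
                = ((k:ℝ) + 8 / (p:ℝ)) * F k * F (k+1) + F k * F (k+1) := by ring
              _ ≤ C * Ra ^ 2 * F (k+1) + F k * F (k+1) := add_le_add_left h1 _
              _ ≤ C * Ra ^ 2 * F k := h3
          exact le_of_mul_le_mul_right h4 hak
    have hfin := hinv K hK le_rfl
    have hden : (0:ℝ) < (p:ℝ) * (K:ℝ) + 8 := by positivity
    have h9 : C * ((p:ℝ) / ((p:ℝ) * (K:ℝ) + 8)) * Ra ^ 2
        = C * Ra ^ 2 * (p:ℝ) / ((p:ℝ) * (K:ℝ) + 8) := by ring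
    rw [h9, le_div_iff₀ hden]
    have h10 : ((K:ℝ) + 8 / (p:ℝ)) * F K * (p:ℝ) = F K * ((p:ℝ) * (K:ℝ) + 8) := by
      field_simp
    calc F K * ((p:ℝ) * (K:ℝ) + 8) = ((K:ℝ) + 8 / (p:ℝ)) * F K * (p:ℝ) := h10.symm
      _ ≤ C * Ra ^ 2 * (p:ℝ) := mul_le_mul_of_nonneg_right hfin hp0.le
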